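/- arXiv:2001.02298 — 3 statements merged into one kernel-verified Lean document; each statement's English description precedes it below -/
import Mathlib

section
/- Suppose β(s) = ∫B(s)ds + λ(s)N(s) for a smooth function λ, β is regular with Frenet frame {T̄, N̄, B̄}, the principal normal satisfies N̄ = εN with ε = ±1, and ⟨T(s), T̄(s)⟩ = cos θ(s) ≠ 0 for all s. Then λ is a nonzero constant, θ is constant, and (λ tan θ)κ(s) + λτ(s) = −1 for all s ∈ I (i.e. γ is a B-Bertrand curve). -/
/-
Differentiating β = ∫B + λN with the Frenet–Serret equations gives
σ T̄ = -λκ T + λ' N + (1 + λτ) B. Since N̄ = ±N is orthogonal to T̄, the N-component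
vanishes, so λ' = 0, and c = ⟪T, T̄⟫, d = ⟪B, T̄⟫ satisfy σc = -λκ, σd = 1 + λτ, c² + d² = 1.
Both c and d have zero derivative because T' ∥ N, B' ∥ N, T̄' ∥ N̄ and N̄ ⟂ T, B, T̄; hence
(c, d) = (cos θ, sin θ) for a constant θ, and dividing the two relations gives
λ tan θ κ = -(1 + λτ). Finally λ ≠ 0, since otherwise σc = 0.
-/

open scoped RealInnerProductSpace

noncomputable def cross3 (x y : EuclideanSpace ℝ (Fin 3)) : EuclideanSpace ℝ (Fin 3) :=
  WithLp.toLp 2 ![x 1 * y 2 - x 2 * y 1, x 2 * y 0 - x 0 * y 2, x 0 * y 1 - x 1 * y 0]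

open Set Filter Topology

variable {E : Type*} [NormedAddCommGroup E] [InnerProductSpace ℝ E]

theorem eq_of_hasDerivAt_eq_zero {F : Type*} [NormedAddCommGroup F] [NormedSpace ℝ F]
    {f : ℝ → F} {s : Set ℝ} (hs : IsOpen s) (hs' : IsPreconnected s)
    (hf : ∀ x ∈ s, HasDerivAt f 0 x) {x y : ℝ} (hx : x ∈ s) (hy : y ∈ s) : f x = f y :=
  hs.is_const_of_deriv_eq_zero hs' (fun z hz => (hf z hz).differentiableAt.differentiableWithinAt)
    (fun z hz => (hf z hz).deriv) hx hy

theorem inner_deriv_eq_zero_of_norm_eq_one {u : ℝ → E} {u' : E} {s : ℝ}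
    (hu : ∀ᶠ t in 𝓝 s, ‖u t‖ = 1) (h : HasDerivAt u u' s) : ⟪u s, u'⟫ = 0 := by
  have hconst : HasDerivAt (‖u ·‖ ^ 2) 0 s :=
    (hasDerivAt_const s (1 : ℝ)).congr_of_eventuallyEq (hu.mono fun t ht => by simp [ht])
  have := hconst.unique h.norm_sq
  linarith

theorem inner_eq_zero_iff_of_eq_or_eq_neg {x m n : E} (h : m = n ∨ m = -n) :
    ⟪x, m⟫ = 0 ↔ ⟪x, n⟫ = 0 := by
  rcases h with rfl | rfl <;> simp

theorem hasDerivAt_inner_eq_zero {u v : ℝ → E} {x y : E} {α β s : ℝ}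
    (hu : HasDerivAt u (α • x) s) (hv : HasDerivAt v (β • y) s)
    (hx : ⟪x, v s⟫ = 0) (hy : ⟪u s, y⟫ = 0) : HasDerivAt (fun t => ⟪u t, v t⟫) 0 s :=
  (hu.inner ℝ hv).congr_deriv (by simp [inner_smul_left, inner_smul_right, hx, hy])

theorem orthonormal_three {t n b : E} (ht : ‖t‖ = 1) (hn : ‖n‖ = 1) (hb : ‖b‖ = 1)
    (htn : ⟪t, n⟫ = 0) (htb : ⟪t, b⟫ = 0) (hnb : ⟪n, b⟫ = 0) : Orthonormal ℝ ![t, n, b] := by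
  simp [orthonormal_vecCons_iff, Fin.forall_fin_two, *]

theorem coeffs_of_smul_eq_of_orthonormal {t n b u : E} {σ p q r : ℝ}
    (hv : Orthonormal ℝ ![t, n, b]) (hu : ‖u‖ = 1) (hun : ⟪n, u⟫ = 0) (hσ : σ ≠ 0)
    (h : σ • u = p • t + q • n + r • b) :
    q = 0 ∧ σ * ⟪t, u⟫ = p ∧ σ * ⟪b, u⟫ = r ∧ ⟪t, u⟫ ^ 2 + ⟪b, u⟫ ^ 2 = 1 := by
  have hsum : σ • u = ∑ i, ![p, q, r] i • ![t, n, b] i := by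
    simp [Fin.sum_univ_three, h, add_assoc]
  have coord (i : Fin 3) : σ * ⟪![t, n, b] i, u⟫ = ![p, q, r] i := by
    rw [← inner_smul_right, hsum, hv.inner_right_fintype]
  have hnorm : σ ^ 2 = p ^ 2 + q ^ 2 + r ^ 2 := by
    have := hv.inner_sum ![p, q, r] ![p, q, r] Finset.univ
    rw [← hsum, inner_smul_left, inner_smul_right, real_inner_self_eq_norm_sq, hu] at this
    simp only [Real.ringHom_apply, one_pow, mul_one, Fin.sum_univ_three, Fin.isValue,
      Matrix.cons_val_zero, Matrix.cons_val_one, Matrix.cons_val] at this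
    linear_combination this
  have hq : q = 0 := by simpa [hun] using (coord 1).symm
  have hp := coord 0
  have hr := coord 2
  simp only [Matrix.cons_val_zero, Matrix.cons_val_two, Matrix.tail_cons, Matrix.head_cons] at hp hr
  refine ⟨hq, hp, hr, mul_left_cancel₀ (pow_ne_zero 2 hσ) ?_⟩
  subst hq
  linear_combination (σ * ⟪t, u⟫ + p) * hp + (σ * ⟪b, u⟫ + r) * hr - hnorm

theorem exists_cos_sin_eq_of_sq_add_sq_eq_one {c d : ℝ} (h : c ^ 2 + d ^ 2 = 1) :
    ∃ θ : ℝ, Real.cos θ = c ∧ Real.sin θ = d := by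
  obtain ⟨θ, hθ⟩ := (Complex.norm_eq_one_iff (c + d * Complex.I)).1 (by
    rw [Complex.norm_add_mul_I, h, Real.sqrt_one])
  refine ⟨θ, ?_, ?_⟩
  · simpa using congrArg Complex.re hθ
  · simpa using congrArg Complex.im hθ

theorem mul_tan_mul_add_mul_eq_neg_one {θ σ l k t : ℝ} (hcos : Real.cos θ ≠ 0)
    (hc : σ * Real.cos θ = -(l * k)) (hs : σ * Real.sin θ = 1 + l * t) :
    l * Real.tan θ * k + l * t = -1 := by
  rw [Real.tan_eq_sin_div_cos]
  field_simp
  linear_combination Real.sin θ * hc - Real.cos θ * hs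

theorem stmt_3_general (a b : ℝ) (T N B : ℝ → EuclideanSpace ℝ (Fin 3)) (κ τ : ℝ → ℝ)
    (hT1 : ∀ s ∈ Set.Ioo a b, ‖T s‖ = 1)
    (hN1 : ∀ s ∈ Set.Ioo a b, ‖N s‖ = 1)
    (hB1 : ∀ s ∈ Set.Ioo a b, ‖B s‖ = 1)
    (hTN : ∀ s ∈ Set.Ioo a b, ⟪T s, N s⟫ = 0)
    (hTB : ∀ s ∈ Set.Ioo a b, ⟪T s, B s⟫ = 0)
    (hNB : ∀ s ∈ Set.Ioo a b, ⟪N s, B s⟫ = 0)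
    (hTder : ∀ s ∈ Set.Ioo a b, HasDerivAt T (κ s • N s) s)
    (hNder : ∀ s ∈ Set.Ioo a b, HasDerivAt N ((-κ s) • T s + τ s • B s) s)
    (hBder : ∀ s ∈ Set.Ioo a b, HasDerivAt B ((-τ s) • N s) s)
    (lam lamd σ κb : ℝ → ℝ)
    (Bint β Tb Nb : ℝ → EuclideanSpace ℝ (Fin 3))
    (hlam : ∀ s ∈ Set.Ioo a b, HasDerivAt lam (lamd s) s)
    (hBint : ∀ s ∈ Set.Ioo a b, HasDerivAt Bint (B s) s)
    (hβ : ∀ s, β s = Bint s + lam s • N s)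
    (hβreg : ∀ s ∈ Set.Ioo a b, HasDerivAt β (σ s • Tb s) s)
    (hσpos : ∀ s ∈ Set.Ioo a b, 0 < σ s)
    (hTb1 : ∀ s ∈ Set.Ioo a b, ‖Tb s‖ = 1)
    (hTbder : ∀ s ∈ Set.Ioo a b, HasDerivAt Tb ((σ s * κb s) • Nb s) s)
    (hκbpos : ∀ s ∈ Set.Ioo a b, 0 < κb s)
    (hNbN : ∀ s ∈ Set.Ioo a b, Nb s = N s ∨ Nb s = -N s)
    (hangle : ∀ s ∈ Set.Ioo a b, ⟪T s, Tb s⟫ ≠ 0) :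
    (∀ s ∈ Set.Ioo a b, ∀ t ∈ Set.Ioo a b, lam s = lam t) ∧
    (∀ s ∈ Set.Ioo a b, lam s ≠ 0) ∧
    ∃ θ : ℝ, ∀ s ∈ Set.Ioo a b,
      ⟪T s, Tb s⟫ = Real.cos θ ∧
      (lam s * Real.tan θ) * κ s + lam s * τ s = -1 := by
  have hframe : ∀ s ∈ Ioo a b, Orthonormal ℝ ![T s, N s, B s] := fun s hs =>
    orthonormal_three (hT1 s hs) (hN1 s hs) (hB1 s hs) (hTN s hs) (hTB s hs) (hNB s hs)
  have hTbNb : ∀ s ∈ Ioo a b, ⟪Tb s, Nb s⟫ = 0 := fun s hs => by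
    have h := inner_deriv_eq_zero_of_norm_eq_one
      (eventually_of_mem (isOpen_Ioo.mem_nhds hs) hTb1) (hTbder s hs)
    rw [inner_smul_right] at h
    exact (mul_eq_zero.1 h).resolve_left (mul_pos (hσpos s hs) (hκbpos s hs)).ne'
  have hperp_Nb : ∀ s ∈ Ioo a b, ∀ v, ⟪v, Nb s⟫ = 0 ↔ ⟪v, N s⟫ = 0 := fun s hs _ =>
    inner_eq_zero_iff_of_eq_or_eq_neg (hNbN s hs)
  have hNTb : ∀ s ∈ Ioo a b, ⟪N s, Tb s⟫ = 0 := fun s hs =>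
    inner_eq_zero_symm.1 ((hperp_Nb s hs _).1 (hTbNb s hs))
  have hβ' : ∀ s ∈ Ioo a b, σ s • Tb s =
      (-(lam s * κ s)) • T s + lamd s • N s + (1 + lam s * τ s) • B s := fun s hs => by
    have h := ((hBint s hs).add ((hlam s hs).smul (hNder s hs))).congr_of_eventuallyEq
      (Eventually.of_forall hβ)
    rw [(hβreg s hs).unique h]
    module
  have hcoords := fun s hs => coeffs_of_smul_eq_of_orthonormal (hframe s hs) (hTb1 s hs)
    (hNTb s hs) (hσpos s hs).ne' (hβ' s hs)
  have hconst {f : ℝ → ℝ} (hf : ∀ x ∈ Ioo a b, HasDerivAt f 0 x) :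
      ∀ s ∈ Ioo a b, ∀ t ∈ Ioo a b, f s = f t := fun s hs t ht =>
    eq_of_hasDerivAt_eq_zero isOpen_Ioo isPreconnected_Ioo hf hs ht
  have hc_const := hconst fun x hx => hasDerivAt_inner_eq_zero (hTder x hx) (hTbder x hx)
    (hNTb x hx) ((hperp_Nb x hx _).2 (hTN x hx))
  have hd_const := hconst fun x hx => hasDerivAt_inner_eq_zero (hBder x hx) (hTbder x hx)
    (hNTb x hx) ((hperp_Nb x hx _).2 (inner_eq_zero_symm.1 (hNB x hx)))
  refine ⟨hconst fun x hx => (hcoords x hx).1 ▸ hlam x hx, fun s hs hlam0 => ?_, ?_⟩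
  · have h := (hcoords s hs).2.1
    rw [hlam0, zero_mul, neg_zero] at h
    exact hangle s hs ((mul_eq_zero.1 h).resolve_left (hσpos s hs).ne')
  rcases (Ioo a b).eq_empty_or_nonempty with hempty | ⟨s₀, hs₀⟩
  · exact ⟨0, by simp [hempty]⟩
  obtain ⟨θ, hcos, hsin⟩ := exists_cos_sin_eq_of_sq_add_sq_eq_one (hcoords s₀ hs₀).2.2.2
  refine ⟨θ, fun s hs => ⟨(hc_const s hs s₀ hs₀).trans hcos.symm, ?_⟩⟩
  obtain ⟨-, hc, hd, -⟩ := hcoords s hs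
  rw [hc_const s hs s₀ hs₀, ← hcos] at hc
  rw [hd_const s hs s₀ hs₀, ← hsin] at hd
  exact mul_tan_mul_add_mul_eq_neg_one (hcos ▸ hangle s₀ hs₀) hc hd

/-- If β = ∫B ds + λN is regular with Frenet principal normal N̄ = ±N and
⟪T, T̄⟫ = cos θ ≠ 0, then λ is a nonzero constant, θ is constant, and
(λ tan θ)κ + λτ = -1 identically: γ is a B-Bertrand curve. -/
theorem stmt_3 (a b : ℝ) (γ T N B : ℝ → EuclideanSpace ℝ (Fin 3)) (κ τ : ℝ → ℝ)
    (hγT : ∀ s ∈ Set.Ioo a b, HasDerivAt γ (T s) s)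
    (hT1 : ∀ s ∈ Set.Ioo a b, ‖T s‖ = 1)
    (hN1 : ∀ s ∈ Set.Ioo a b, ‖N s‖ = 1)
    (hB1 : ∀ s ∈ Set.Ioo a b, ‖B s‖ = 1)
    (hTN : ∀ s ∈ Set.Ioo a b, ⟪T s, N s⟫ = 0)
    (hTB : ∀ s ∈ Set.Ioo a b, ⟪T s, B s⟫ = 0)
    (hNB : ∀ s ∈ Set.Ioo a b, ⟪N s, B s⟫ = 0)
    (horient : ∀ s ∈ Set.Ioo a b, B s = cross3 (T s) (N s))
    (hκpos : ∀ s ∈ Set.Ioo a b, 0 < κ s)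
    (hTder : ∀ s ∈ Set.Ioo a b, HasDerivAt T (κ s • N s) s)
    (hNder : ∀ s ∈ Set.Ioo a b, HasDerivAt N ((-κ s) • T s + τ s • B s) s)
    (hBder : ∀ s ∈ Set.Ioo a b, HasDerivAt B ((-τ s) • N s) s)
    (lam lamd σ κb : ℝ → ℝ)
    (Bint β Tb Nb : ℝ → EuclideanSpace ℝ (Fin 3))
    (hlam : ∀ s ∈ Set.Ioo a b, HasDerivAt lam (lamd s) s)
    (hBint : ∀ s ∈ Set.Ioo a b, HasDerivAt Bint (B s) s)
    (hβ : ∀ s, β s = Bint s + lam s • N s)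
    (hβreg : ∀ s ∈ Set.Ioo a b, HasDerivAt β (σ s • Tb s) s)
    (hσpos : ∀ s ∈ Set.Ioo a b, 0 < σ s)
    (hTb1 : ∀ s ∈ Set.Ioo a b, ‖Tb s‖ = 1)
    (hTbder : ∀ s ∈ Set.Ioo a b, HasDerivAt Tb ((σ s * κb s) • Nb s) s)
    (hκbpos : ∀ s ∈ Set.Ioo a b, 0 < κb s)
    (hNb1 : ∀ s ∈ Set.Ioo a b, ‖Nb s‖ = 1)
    (hNbN : ∀ s ∈ Set.Ioo a b, Nb s = N s ∨ Nb s = -N s)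
    (hangle : ∀ s ∈ Set.Ioo a b, ⟪T s, Tb s⟫ ≠ 0) :
    (∀ s ∈ Set.Ioo a b, ∀ t ∈ Set.Ioo a b, lam s = lam t) ∧
    (∀ s ∈ Set.Ioo a b, lam s ≠ 0) ∧
    ∃ θ : ℝ, ∀ s ∈ Set.Ioo a b,
      ⟪T s, Tb s⟫ = Real.cos θ ∧
      (lam s * Real.tan θ) * κ s + lam s * τ s = -1 :=
  stmt_3_general a b T N B κ τ hT1 hN1 hB1 hTN hTB hNB hTder hNder hBder lam lamd σ κb Bint β Tb Nb
    hlam hBint hβ hβreg hσpos hTb1 hTbder hκbpos hNbN hangle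
end

section
/- Define the principal-direction curve γ_N of γ by γ_N′(s) = N(s). Then γ_N is a unit-speed curve with tangent T₁ = N, curvature κ₁ = √(κ² + τ²) > 0, and torsion τ₁ = (κ²/(κ² + τ²))·(τ/κ)′, where torsion is taken with respect to the Frenet frame of γ_N. -/
/-!
Differentiating `N` gives `N' = -κ T + τ B`, of length `w = √(κ² + τ²)`, so `γ_N` has curvature `w`
and principal normal `N₁ = w⁻¹ (-κ T + τ B)`; its binormal is `B₁ = N × N₁ = w⁻¹ (τ T + κ B)`.
In the derivative of `τ T + κ B` the `N`-terms `τκ N - κτ N` cancel, leaving `τ' T + κ' B`, and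
differentiating the factor `w⁻¹` as well one finds `B₁' = -(κ²/w²) (τ/κ)' N₁`.
-/

open scoped RealInnerProductSpace

theorem cross3_smul_add_smul_cross3 (n t : EuclideanSpace ℝ (Fin 3)) (x y : ℝ) :
    cross3 n (x • t + y • cross3 t n) = y • (⟪n, n⟫ • t - ⟪n, t⟫ • n) - x • cross3 t n := by
  ext i
  simp only [PiLp.inner_apply, RCLike.inner_apply, conj_trivial, Fin.sum_univ_three]
  fin_cases i <;> simp [cross3] <;> ring

theorem cross3_smul_add_smul_cross3_of_unit {n t : EuclideanSpace ℝ (Fin 3)} (hn : ‖n‖ = 1)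
    (hnt : ⟪n, t⟫ = 0) (x y : ℝ) :
    cross3 n (x • t + y • cross3 t n) = y • t - x • cross3 t n := by
  rw [cross3_smul_add_smul_cross3, hnt, real_inner_self_eq_norm_sq, hn]
  simp

theorem norm_smul_add_smul_of_orthonormal {F : Type*} [NormedAddCommGroup F]
    [InnerProductSpace ℝ F] {x y : F} (hx : ‖x‖ = 1) (hy : ‖y‖ = 1) (hxy : ⟪x, y⟫ = 0)
    (a b : ℝ) : ‖a • x + b • y‖ = √(a ^ 2 + b ^ 2) := by
  have hortho : ⟪a • x, b • y⟫ = 0 := by simp [real_inner_smul_left, real_inner_smul_right, hxy]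
  rw [norm_add_eq_sqrt_iff_real_inner_eq_zero.2 hortho, norm_smul, norm_smul, hx, hy,
    Real.norm_eq_abs, Real.norm_eq_abs]
  congr 1
  nlinarith [sq_abs a, sq_abs b]

section FrenetDerivatives

variable {E : Type*} [NormedAddCommGroup E] [NormedSpace ℝ E] {κ τ : ℝ → ℝ} {T N B : ℝ → E}
  {s κ' τ' : ℝ}

variable (κ τ T B) in
noncomputable def principalDirectionNormal (s : ℝ) : E :=
  (√(κ s ^ 2 + τ s ^ 2))⁻¹ • ((-κ s) • T s + τ s • B s)

variable (κ τ T B) in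
noncomputable def principalDirectionBinormal (s : ℝ) : E :=
  (√(κ s ^ 2 + τ s ^ 2))⁻¹ • (τ s • T s + κ s • B s)

theorem hasDerivAt_torsion_smul_add_curvature_smul (hT : HasDerivAt T (κ s • N s) s)
    (hB : HasDerivAt B ((-τ s) • N s) s) (hκ : HasDerivAt κ κ' s) (hτ : HasDerivAt τ τ' s) :
    HasDerivAt (fun x => τ x • T x + κ x • B x) (τ' • T s + κ' • B s) s := by
  refine ((hτ.smul hT).add (hκ.smul hB)).congr_deriv ?_
  module

theorem hasDerivAt_sqrt_sq_add_sq (hκ : HasDerivAt κ κ' s) (hτ : HasDerivAt τ τ' s)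
    (h : κ s ^ 2 + τ s ^ 2 ≠ 0) :
    HasDerivAt (fun x => √(κ x ^ 2 + τ x ^ 2))
      ((κ s * κ' + τ s * τ') / √(κ s ^ 2 + τ s ^ 2)) s := by
  have hQ : HasDerivAt (fun x => κ x ^ 2 + τ x ^ 2) (2 * κ s * κ' + 2 * τ s * τ') s := by
    refine ((hκ.pow 2).add (hτ.pow 2)).congr_deriv ?_
    push_cast
    ring
  refine (hQ.sqrt h).congr_deriv ?_
  field_simp

theorem hasDerivAt_principalDirectionBinormal
    (hT : HasDerivAt T (κ s • N s) s) (hB : HasDerivAt B ((-τ s) • N s) s)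
    (hκ : DifferentiableAt ℝ κ s) (hτ : DifferentiableAt ℝ τ s) (hκ0 : κ s ≠ 0) :
    HasDerivAt (principalDirectionBinormal κ τ T B)
      ((-(κ s ^ 2 / (κ s ^ 2 + τ s ^ 2) * deriv (fun t => τ t / κ t) s)) •
        principalDirectionNormal κ τ T B s) s := by
  have hQ : 0 < κ s ^ 2 + τ s ^ 2 := by positivity
  have hw : √(κ s ^ 2 + τ s ^ 2) ≠ 0 := (Real.sqrt_pos.2 hQ).ne'
  have hw2 : √(κ s ^ 2 + τ s ^ 2) ^ 2 = κ s ^ 2 + τ s ^ 2 := Real.sq_sqrt hQ.le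
  have hdiv : deriv (fun t => τ t / κ t) s = (deriv τ s * κ s - τ s * deriv κ s) / κ s ^ 2 :=
    (hτ.hasDerivAt.div hκ.hasDerivAt hκ0).deriv
  rw [hdiv]
  refine (((hasDerivAt_sqrt_sq_add_sq hκ.hasDerivAt hτ.hasDerivAt hQ.ne').inv hw).smul
    (hasDerivAt_torsion_smul_add_curvature_smul hT hB hκ.hasDerivAt hτ.hasDerivAt)).congr_deriv ?_
  simp only [principalDirectionNormal, Pi.inv_apply]
  match_scalars <;> field_simp
  · linear_combination (τ s * (κ s * deriv κ s + τ s * deriv τ s)) * hw2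
  · linear_combination (κ s * (κ s * deriv κ s + τ s * deriv τ s)) * hw2

end FrenetDerivatives

theorem stmt_16_general (a b : ℝ) (T N B : ℝ → EuclideanSpace ℝ (Fin 3)) (κ τ : ℝ → ℝ)
    (hT1 : ∀ s ∈ Set.Ioo a b, ‖T s‖ = 1)
    (hN1 : ∀ s ∈ Set.Ioo a b, ‖N s‖ = 1)
    (hB1 : ∀ s ∈ Set.Ioo a b, ‖B s‖ = 1)
    (hTN : ∀ s ∈ Set.Ioo a b, ⟪T s, N s⟫ = 0)
    (hTB : ∀ s ∈ Set.Ioo a b, ⟪T s, B s⟫ = 0)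
    (horient : ∀ s ∈ Set.Ioo a b, B s = cross3 (T s) (N s))
    (hκpos : ∀ s ∈ Set.Ioo a b, 0 < κ s)
    (hTder : ∀ s ∈ Set.Ioo a b, HasDerivAt T (κ s • N s) s)
    (hNder : ∀ s ∈ Set.Ioo a b, HasDerivAt N ((-κ s) • T s + τ s • B s) s)
    (hBder : ∀ s ∈ Set.Ioo a b, HasDerivAt B ((-τ s) • N s) s)
    (hκd : ∀ s ∈ Set.Ioo a b, DifferentiableAt ℝ κ s)
    (hτd : ∀ s ∈ Set.Ioo a b, DifferentiableAt ℝ τ s) :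
    ∃ N₁ B₁ : ℝ → EuclideanSpace ℝ (Fin 3), ∀ s ∈ Set.Ioo a b,
      ‖N s‖ = 1 ∧
      0 < Real.sqrt (κ s ^ 2 + τ s ^ 2) ∧
      HasDerivAt N (Real.sqrt (κ s ^ 2 + τ s ^ 2) • N₁ s) s ∧
      ‖N₁ s‖ = 1 ∧
      B₁ s = cross3 (N s) (N₁ s) ∧
      HasDerivAt B₁
        ((-(κ s ^ 2 / (κ s ^ 2 + τ s ^ 2) * deriv (fun t => τ t / κ t) s)) • N₁ s) s := by
  refine ⟨principalDirectionNormal κ τ T B, principalDirectionBinormal κ τ T B, fun s hs => ?_⟩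
  have hw : 0 < √(κ s ^ 2 + τ s ^ 2) := Real.sqrt_pos.2 (by nlinarith [hκpos s hs])
  have hdN_norm : ‖(-κ s) • T s + τ s • B s‖ = √(κ s ^ 2 + τ s ^ 2) := by
    rw [norm_smul_add_smul_of_orthonormal (hT1 s hs) (hB1 s hs) (hTB s hs), neg_sq]
  refine ⟨hN1 s hs, hw, ?_, ?_, ?_, hasDerivAt_principalDirectionBinormal (hTder s hs) (hBder s hs)
    (hκd s hs) (hτd s hs) (hκpos s hs).ne'⟩ <;> unfold principalDirectionNormal
  · rw [smul_inv_smul₀ hw.ne']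
    exact hNder s hs
  · rw [norm_smul, hdN_norm, norm_inv, Real.norm_of_nonneg hw.le, inv_mul_cancel₀ hw.ne']
  · rw [principalDirectionBinormal, horient s hs]
    conv_rhs => rw [smul_add, smul_smul, smul_smul,
      cross3_smul_add_smul_cross3_of_unit (hN1 s hs) (real_inner_comm (T s) (N s) ▸ hTN s hs)]
    module

/-- The principal-direction curve γ_N (γ_N' = N) is unit speed with
tangent N, curvature κ₁ = √(κ² + τ²) > 0 and torsion
τ₁ = (κ²/(κ² + τ²))·(τ/κ)', computed in the Frenet frame of γ_N. -/
theorem stmt_16 (a b : ℝ) (γ T N B : ℝ → EuclideanSpace ℝ (Fin 3)) (κ τ : ℝ → ℝ)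
    (hγT : ∀ s ∈ Set.Ioo a b, HasDerivAt γ (T s) s)
    (hT1 : ∀ s ∈ Set.Ioo a b, ‖T s‖ = 1)
    (hN1 : ∀ s ∈ Set.Ioo a b, ‖N s‖ = 1)
    (hB1 : ∀ s ∈ Set.Ioo a b, ‖B s‖ = 1)
    (hTN : ∀ s ∈ Set.Ioo a b, ⟪T s, N s⟫ = 0)
    (hTB : ∀ s ∈ Set.Ioo a b, ⟪T s, B s⟫ = 0)
    (hNB : ∀ s ∈ Set.Ioo a b, ⟪N s, B s⟫ = 0)
    (horient : ∀ s ∈ Set.Ioo a b, B s = cross3 (T s) (N s))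
    (hκpos : ∀ s ∈ Set.Ioo a b, 0 < κ s)
    (hTder : ∀ s ∈ Set.Ioo a b, HasDerivAt T (κ s • N s) s)
    (hNder : ∀ s ∈ Set.Ioo a b, HasDerivAt N ((-κ s) • T s + τ s • B s) s)
    (hBder : ∀ s ∈ Set.Ioo a b, HasDerivAt B ((-τ s) • N s) s)
    (hκd : ∀ s ∈ Set.Ioo a b, DifferentiableAt ℝ κ s)
    (hτd : ∀ s ∈ Set.Ioo a b, DifferentiableAt ℝ τ s)
    (γN : ℝ → EuclideanSpace ℝ (Fin 3))
    (hγN : ∀ s ∈ Set.Ioo a b, HasDerivAt γN (N s) s) :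
    ∃ N₁ B₁ : ℝ → EuclideanSpace ℝ (Fin 3), ∀ s ∈ Set.Ioo a b,
      ‖N s‖ = 1 ∧
      0 < Real.sqrt (κ s ^ 2 + τ s ^ 2) ∧
      HasDerivAt N (Real.sqrt (κ s ^ 2 + τ s ^ 2) • N₁ s) s ∧
      ‖N₁ s‖ = 1 ∧
      B₁ s = cross3 (N s) (N₁ s) ∧
      HasDerivAt B₁
        ((-(κ s ^ 2 / (κ s ^ 2 + τ s ^ 2) * deriv (fun t => τ t / κ t) s)) • N₁ s) s :=
  stmt_16_general a b T N B κ τ hT1 hN1 hB1 hTN hTB horient hκpos hTder hNder hBder hκd hτd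
end

section
/- Fix 0 ∈ I and set θ(s) = ∫₀ˢ τ(u)du, and assume κ(s)cos θ(s) > 0 for all s ∈ I. Define the principal-donor curve γ_pdo of γ by γ_pdo′(s) = −cos θ(s)·N(s) + sin θ(s)·B(s). Then γ_pdo is a unit-speed curve whose curvature is κ_pdo(s) = κ(s)cos θ(s), whose torsion is τ_pdo(s) = κ(s)sin θ(s), and whose principal normal is N_pdo = T. -/
open scoped RealInnerProductSpace

/-!
Rotating the normal plane by the angle θ = ∫₀ˢ τ cancels the torsion terms of the Frenet
equations: with θ' = τ, the rotated normal -cos θ N + sin θ B has derivative κ cos θ T and the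
rotated binormal cos θ B + sin θ N has derivative -κ sin θ T. Since (N, B) is orthonormal, the
rotated normal is a unit vector, and the vector triple product identity shows that its cross
product with T is the rotated binormal.
-/

open Real Set

section Cross

variable (x y z : EuclideanSpace ℝ (Fin 3))

lemma cross3_swap : cross3 y x = -cross3 x y := by
  ext i; fin_cases i <;> simp [cross3] <;> ring

lemma cross3_add_left : cross3 (x + y) z = cross3 x z + cross3 y z := by
  ext i; fin_cases i <;> simp [cross3] <;> ring

lemma cross3_smul_left (c : ℝ) : cross3 (c • x) y = c • cross3 x y := by
  ext i; fin_cases i <;> simp [cross3] <;> ring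

lemma cross3_cross3_left : cross3 (cross3 x y) z = ⟪x, z⟫ • y - ⟪y, z⟫ • x := by
  ext i; fin_cases i <;> simp [cross3, PiLp.inner_apply, Fin.sum_univ_three] <;> ring

lemma cross3_neg_cos_smul_add_sin_smul {T N : EuclideanSpace ℝ (Fin 3)} (hT : ‖T‖ = 1)
    (hTN : ⟪T, N⟫ = 0) (c s : ℝ) :
    cross3 ((-c) • N + s • cross3 T N) T = c • cross3 T N + s • N := by
  have hTT : ⟪T, T⟫ = 1 := by rw [real_inner_self_eq_norm_sq, hT, one_pow]
  rw [cross3_add_left, cross3_smul_left, cross3_smul_left, cross3_swap, cross3_cross3_left,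
    hTT, real_inner_comm, hTN]
  module

end Cross

lemma norm_smul_add_smul_of_orthonormal_s18 {F : Type*} [NormedAddCommGroup F] [InnerProductSpace ℝ F]
    {u v : F} (hu : ‖u‖ = 1) (hv : ‖v‖ = 1) (huv : ⟪u, v⟫ = 0) {a b : ℝ} (hab : a ^ 2 + b ^ 2 = 1) :
    ‖a • u + b • v‖ = 1 := by
  have hsq : ‖a • u + b • v‖ ^ 2 = 1 := by
    rw [norm_add_sq_real, norm_smul, norm_smul, real_inner_smul_left, real_inner_smul_right, huv,
      hu, hv, Real.norm_eq_abs, Real.norm_eq_abs, mul_pow, mul_pow, sq_abs, sq_abs]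
    linear_combination hab
  exact (pow_eq_one_iff_of_nonneg (norm_nonneg _) two_ne_zero).1 hsq

lemma hasDerivAt_integral_of_continuousOn {E : Type*} [NormedAddCommGroup E] [NormedSpace ℝ E]
    [CompleteSpace E] {f : ℝ → E} {U : Set ℝ} (hU : IsOpen U) [U.OrdConnected]
    (hf : ContinuousOn f U) {c s : ℝ} (hc : c ∈ U) (hs : s ∈ U) :
    HasDerivAt (fun r => ∫ t in c..r, f t) (f s) s :=
  intervalIntegral.integral_hasDerivAt_right
    ((hf.mono (Set.OrdConnected.uIcc_subset ‹_› hc hs)).intervalIntegrable)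
    (hf.stronglyMeasurableAtFilter hU s hs) (hf.continuousAt (hU.mem_nhds hs))

section Frenet

variable {E : Type*} [NormedAddCommGroup E] [NormedSpace ℝ E] {θ : ℝ → ℝ} {T N B : ℝ → E}
  {k t s : ℝ}

lemma hasDerivAt_neg_cos_smul_add_sin_smul_of_frenet (hθ : HasDerivAt θ t s)
    (hN : HasDerivAt N ((-k) • T s + t • B s) s) (hB : HasDerivAt B ((-t) • N s) s) :
    HasDerivAt (fun r => (-cos (θ r)) • N r + sin (θ r) • B r) ((k * cos (θ s)) • T s) s :=
  ((hθ.cos.neg.smul hN).add (hθ.sin.smul hB)).congr_deriv (by simp only [Pi.neg_apply]; module)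

lemma hasDerivAt_cos_smul_add_sin_smul_of_frenet (hθ : HasDerivAt θ t s)
    (hN : HasDerivAt N ((-k) • T s + t • B s) s) (hB : HasDerivAt B ((-t) • N s) s) :
    HasDerivAt (fun r => cos (θ r) • B r + sin (θ r) • N r) ((-(k * sin (θ s))) • T s) s :=
  ((hθ.cos.smul hB).add (hθ.sin.smul hN)).congr_deriv (by module)

end Frenet

theorem stmt_18_general (a b : ℝ) (T N B : ℝ → EuclideanSpace ℝ (Fin 3)) (κ τ : ℝ → ℝ)
    (hT1 : ∀ s ∈ Set.Ioo a b, ‖T s‖ = 1)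
    (hN1 : ∀ s ∈ Set.Ioo a b, ‖N s‖ = 1)
    (hB1 : ∀ s ∈ Set.Ioo a b, ‖B s‖ = 1)
    (hTN : ∀ s ∈ Set.Ioo a b, ⟪T s, N s⟫ = 0)
    (hNB : ∀ s ∈ Set.Ioo a b, ⟪N s, B s⟫ = 0)
    (horient : ∀ s ∈ Set.Ioo a b, B s = cross3 (T s) (N s))
    (hNder : ∀ s ∈ Set.Ioo a b, HasDerivAt N ((-κ s) • T s + τ s • B s) s)
    (hBder : ∀ s ∈ Set.Ioo a b, HasDerivAt B ((-τ s) • N s) s)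
    (h0 : (0:ℝ) ∈ Set.Ioo a b) (hτcont : ContinuousOn τ (Set.Ioo a b)) :
    ∀ s ∈ Set.Ioo a b,
      ‖(-Real.cos (∫ t in (0:ℝ)..s, τ t)) • N s +
          Real.sin (∫ t in (0:ℝ)..s, τ t) • B s‖ = 1 ∧
      HasDerivAt (fun r => (-Real.cos (∫ t in (0:ℝ)..r, τ t)) • N r +
          Real.sin (∫ t in (0:ℝ)..r, τ t) • B r)
        ((κ s * Real.cos (∫ t in (0:ℝ)..s, τ t)) • T s) s ∧
      Real.cos (∫ t in (0:ℝ)..s, τ t) • B s + Real.sin (∫ t in (0:ℝ)..s, τ t) • N s =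
        cross3 ((-Real.cos (∫ t in (0:ℝ)..s, τ t)) • N s +
          Real.sin (∫ t in (0:ℝ)..s, τ t) • B s) (T s) ∧
      HasDerivAt (fun r => Real.cos (∫ t in (0:ℝ)..r, τ t) • B r +
          Real.sin (∫ t in (0:ℝ)..r, τ t) • N r)
        ((-(κ s * Real.sin (∫ t in (0:ℝ)..s, τ t))) • T s) s := by
  intro s hs
  have hθ : HasDerivAt (fun r => ∫ t in (0:ℝ)..r, τ t) (τ s) s :=
    hasDerivAt_integral_of_continuousOn isOpen_Ioo hτcont h0 hs
  refine ⟨norm_smul_add_smul_of_orthonormal_s18 (hN1 s hs) (hB1 s hs) (hNB s hs) ?_,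
    hasDerivAt_neg_cos_smul_add_sin_smul_of_frenet hθ (hNder s hs) (hBder s hs), ?_,
    hasDerivAt_cos_smul_add_sin_smul_of_frenet hθ (hNder s hs) (hBder s hs)⟩
  · rw [neg_sq, cos_sq_add_sin_sq]
  · rw [horient s hs, cross3_neg_cos_smul_add_sin_smul (hT1 s hs) (hTN s hs)]

/-- With θ(s) = ∫₀ˢ τ and κ cos θ > 0 on I, the principal-donor curve
γ_pdo (γ_pdo' = -cos θ·N + sin θ·B) is unit speed with curvature κ cos θ, torsion
κ sin θ, and principal normal T. -/
theorem stmt_18 (a b : ℝ) (γ T N B : ℝ → EuclideanSpace ℝ (Fin 3)) (κ τ : ℝ → ℝ)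
    (hγT : ∀ s ∈ Set.Ioo a b, HasDerivAt γ (T s) s)
    (hT1 : ∀ s ∈ Set.Ioo a b, ‖T s‖ = 1)
    (hN1 : ∀ s ∈ Set.Ioo a b, ‖N s‖ = 1)
    (hB1 : ∀ s ∈ Set.Ioo a b, ‖B s‖ = 1)
    (hTN : ∀ s ∈ Set.Ioo a b, ⟪T s, N s⟫ = 0)
    (hTB : ∀ s ∈ Set.Ioo a b, ⟪T s, B s⟫ = 0)
    (hNB : ∀ s ∈ Set.Ioo a b, ⟪N s, B s⟫ = 0)
    (horient : ∀ s ∈ Set.Ioo a b, B s = cross3 (T s) (N s))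
    (hκpos : ∀ s ∈ Set.Ioo a b, 0 < κ s)
    (hTder : ∀ s ∈ Set.Ioo a b, HasDerivAt T (κ s • N s) s)
    (hNder : ∀ s ∈ Set.Ioo a b, HasDerivAt N ((-κ s) • T s + τ s • B s) s)
    (hBder : ∀ s ∈ Set.Ioo a b, HasDerivAt B ((-τ s) • N s) s)
    (h0 : (0:ℝ) ∈ Set.Ioo a b) (hτcont : ContinuousOn τ (Set.Ioo a b))
    (hpos : ∀ s ∈ Set.Ioo a b, 0 < κ s * Real.cos (∫ t in (0:ℝ)..s, τ t))
    (γpdo : ℝ → EuclideanSpace ℝ (Fin 3))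
    (hγpdo : ∀ s ∈ Set.Ioo a b, HasDerivAt γpdo
      ((-Real.cos (∫ t in (0:ℝ)..s, τ t)) • N s +
        Real.sin (∫ t in (0:ℝ)..s, τ t) • B s) s) :
    ∀ s ∈ Set.Ioo a b,
      ‖(-Real.cos (∫ t in (0:ℝ)..s, τ t)) • N s +
          Real.sin (∫ t in (0:ℝ)..s, τ t) • B s‖ = 1 ∧
      HasDerivAt (fun r => (-Real.cos (∫ t in (0:ℝ)..r, τ t)) • N r +
          Real.sin (∫ t in (0:ℝ)..r, τ t) • B r)
        ((κ s * Real.cos (∫ t in (0:ℝ)..s, τ t)) • T s) s ∧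
      Real.cos (∫ t in (0:ℝ)..s, τ t) • B s + Real.sin (∫ t in (0:ℝ)..s, τ t) • N s =
        cross3 ((-Real.cos (∫ t in (0:ℝ)..s, τ t)) • N s +
          Real.sin (∫ t in (0:ℝ)..s, τ t) • B s) (T s) ∧
      HasDerivAt (fun r => Real.cos (∫ t in (0:ℝ)..r, τ t) • B r +
          Real.sin (∫ t in (0:ℝ)..r, τ t) • N r)
        ((-(κ s * Real.sin (∫ t in (0:ℝ)..s, τ t))) • T s) s :=
  stmt_18_general a b T N B κ τ hT1 hN1 hB1 hTN hNB horient hNder hBder h0 hτcont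
end
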